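/- arXiv:1905.09212 — 2 statements merged into one kernel-verified Lean document; each statement's English description precedes it below -/
import Mathlib

section
/- Let n be an odd positive integer and s a real number with s > 0. Then Σ_{k=0}^∞ C(2^k, −n) · 2^{−ks} equals: 1 + 2^{−s} if n ≡ 1 (mod 8); 1 + 2^{−s} + 2 · 2^{−2s} if n ≡ 3 (mod 8); 1 + 2^{−s} if n ≡ 5 (mod 8); and (1 + 2^{−2s} + 2 · 2^{−3s}) / (1 − 2^{−s}) if n ≡ 7 (mod 8). -/
/-!
For odd `a`, the congruence `x² ≡ a (mod 2^k)` has one solution for `k ≤ 1`, and for `k = 2`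
two or none according as `a ≡ 1` or `3 (mod 4)`. For `k ≥ 3` there is none unless `a ≡ 1 (mod 8)`,
since odd squares are `1 (mod 8)`; if `a ≡ 1 (mod 8)`, Hensel's lemma makes `a` a square `u²` of
a unit in `ℤ₂`, and `x ↦ u⁻¹ x` matches the solutions with those of `x² ≡ 1`, which are
`±1` and `2^(k-1) ± 1`. In `x = 2^(-s)` the series is thus a quadratic polynomial plus a
geometric tail starting at `k = 3`.
-/

/-- `C m n` is the number of residues `x` modulo `m` with `x² ≡ n (mod m)`. -/
noncomputable def C (m : ℕ) (n : ℤ) : ℕ := Nat.card {x : ZMod m // x ^ 2 = (n : ZMod m)}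

lemma C_intCast_emod (m : ℕ) (a : ℤ) : C m (a % m) = C m a := by
  rw [C, C, ZMod.intCast_mod]

lemma C_eq_zero_iff {m : ℕ} [NeZero m] {a : ℤ} : C m a = 0 ↔ ¬IsSquare (a : ZMod m) := by
  rw [C, Nat.card_eq_zero, or_iff_left (not_infinite_iff_finite.mpr inferInstance),
    isEmpty_subtype]
  simp [IsSquare, eq_comm, sq]

lemma C_eq_zero_of_dvd {d m : ℕ} [NeZero d] [NeZero m] (hdm : d ∣ m) {a : ℤ} (h : C d a = 0) :
    C m a = 0 := by
  rw [C_eq_zero_iff] at h ⊢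
  exact fun hsq => h (by simpa using hsq.map (ZMod.castHom hdm (ZMod d)))

lemma C_one (a : ℤ) : C 1 a = 1 := by
  rw [C, Nat.card_eq_one_iff_unique]
  exact ⟨inferInstance, ⟨⟨0, Subsingleton.elim _ _⟩⟩⟩

lemma C_two {a : ℤ} (ha : Odd a) : C 2 a = 1 := by
  rw [← C_intCast_emod, Nat.cast_ofNat, Int.odd_iff.mp ha, C, Nat.card_eq_fintype_card]
  decide

lemma C_four {a : ℤ} (ha : Odd a) : C 4 a = if a % 4 = 1 then 2 else 0 := by
  rw [← C_intCast_emod, C, Nat.card_eq_fintype_card]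
  have : a % 4 = 1 ∨ a % 4 = 3 := by rcases ha with ⟨k, rfl⟩; omega
  rcases this with hr | hr <;> simp only [Nat.cast_ofNat, hr] <;> decide

lemma C_eight_eq_zero {a : ℤ} (ha : Odd a) (h : a % 8 ≠ 1) : C 8 a = 0 := by
  rw [← C_intCast_emod, C, Nat.card_eq_fintype_card]
  have : a % 8 = 3 ∨ a % 8 = 5 ∨ a % 8 = 7 := by rcases ha with ⟨k, rfl⟩; omega
  rcases this with hr | hr | hr <;> simp only [Nat.cast_ofNat, hr] <;> decide

-- Hensel's lemma applies at `1`: `‖1 - a‖ ≤ 2⁻³ < ‖2‖²`.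
lemma PadicInt.exists_sq_eq_intCast_of_emod_eight_eq_one {a : ℤ} (ha : a % 8 = 1) :
    ∃ z : ℤ_[2], z ^ 2 = a := by
  have hnorm : ‖(Polynomial.X ^ 2 - Polynomial.C a).aeval (1 : ℤ_[2])‖ <
      ‖(Polynomial.X ^ 2 - Polynomial.C a).derivative.aeval (1 : ℤ_[2])‖ ^ 2 := by
    have h8 : ‖((1 - a : ℤ) : ℤ_[2])‖ ≤ (2 : ℝ) ^ (-(3 : ℕ) : ℤ) :=
      PadicInt.norm_int_le_pow_iff_dvd.mpr (by omega)
    have h2 : ‖(2 : ℤ_[2])‖ = 2⁻¹ := by exact_mod_cast PadicInt.norm_p (p := 2)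
    simp only [eq_intCast, Polynomial.aeval_sub, map_pow, Polynomial.aeval_X, one_pow, map_intCast,
      Polynomial.derivative_sub, Polynomial.derivative_X_pow_succ, Nat.cast_one, Int.reduceAdd,
      map_ofNat, pow_one, Polynomial.derivative_intCast, sub_zero, map_mul, mul_one, h2]
    push_cast at h8
    exact h8.trans_lt (by norm_num)
  obtain ⟨z, hz, -⟩ := hensels_lemma hnorm
  exact ⟨z, by simpa [sub_eq_zero] using hz⟩

lemma isSquare_intCast_two_pow_of_emod_eight_eq_one {a : ℤ} (ha : a % 8 = 1) (k : ℕ) :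
    IsSquare (a : ZMod (2 ^ k)) := by
  obtain ⟨z, hz⟩ := PadicInt.exists_sq_eq_intCast_of_emod_eight_eq_one ha
  exact ⟨PadicInt.toZModPow k z, by rw [← sq, ← map_pow, hz, map_intCast]⟩

lemma isUnit_intCast_two_pow {a : ℤ} (ha : Odd a) (k : ℕ) : IsUnit (a : ZMod (2 ^ k)) := by
  rw [ZMod.coe_int_isUnit_iff_isCoprime]
  push_cast
  exact (Int.isCoprime_two_left.mpr ha).pow_left

lemma card_sq_eq_sq_of_isUnit {R : Type*} [CommRing R] {u : R} (hu : IsUnit u) :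
    Nat.card {x : R // x ^ 2 = u ^ 2} = Nat.card {x : R // x ^ 2 = 1} :=
  Nat.card_congr <| (Equiv.subtypeEquiv hu.unit.mulLeft fun x => by
    simp [mul_pow, (hu.pow 2).mul_eq_left]).symm

lemma Int.two_pow_dvd_sub_one_or_add_one_of_dvd_sq_sub_one {v : ℤ} {k : ℕ}
    (h : 2 ^ (k + 2) ∣ v ^ 2 - 1) : 2 ^ (k + 1) ∣ v - 1 ∨ 2 ^ (k + 1) ∣ v + 1 := by
  have hv : Odd v := by
    have : Even (v ^ 2 - 1) := even_iff_two_dvd.mpr ((dvd_pow_self 2 (by omega)).trans h)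
    simpa [parity_simps] using this
  obtain ⟨w, rfl⟩ := hv
  have hw : 2 ^ k ∣ w * (w + 1) := by
    rw [show (2 : ℤ) ^ (k + 2) = 4 * 2 ^ k by ring,
      show (2 * w + 1) ^ 2 - 1 = 4 * (w * (w + 1)) by ring] at h
    exact (mul_dvd_mul_iff_left four_ne_zero).mp h
  rcases Int.even_or_odd w with hw2 | hw2
  · left
    have : ¬ 2 ∣ w + 1 := by rw [← even_iff_two_dvd]; simpa [parity_simps] using hw2
    simpa [pow_succ'] using mul_dvd_mul_left 2 (Int.prime_two.pow_dvd_of_dvd_mul_right k this hw)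
  · right
    have : ¬ 2 ∣ w := by rw [← even_iff_two_dvd]; simpa using hw2
    have := mul_dvd_mul_left 2 (Int.prime_two.pow_dvd_of_dvd_mul_left k this hw)
    rwa [← pow_succ', show 2 * (w + 1) = 2 * w + 1 + 1 by ring] at this

lemma mul_intCast_eq_zero_or_eq_self {R : Type*} [CommRing R] {c : R} (hc : 2 * c = 0) (t : ℤ) :
    c * t = 0 ∨ c * t = c := by
  obtain ⟨q, rfl | rfl⟩ := Int.even_or_odd' t
  · left; push_cast; linear_combination (q : R) * hc
  · right; push_cast; linear_combination (q : R) * hc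

section TwoPow

variable {m : ℕ}

lemma ZMod.two_pow_self : (2 : ZMod (2 ^ m)) ^ m = 0 := by
  exact_mod_cast ZMod.natCast_self (2 ^ m)

lemma ZMod.sq_eq_one_iff_of_two_pow {x : ZMod (2 ^ (m + 3))} :
    x ^ 2 = 1 ↔ x = 1 ∨ x = -1 ∨ x = 2 ^ (m + 2) + 1 ∨ x = 2 ^ (m + 2) - 1 := by
  set c : ZMod (2 ^ (m + 3)) := 2 ^ (m + 2)
  have hc2 : 2 * c = 0 := by rw [← ZMod.two_pow_self]; ring
  have hcc : c * c = 0 := by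
    rw [show c * c = 2 ^ (m + 3) * 2 ^ (m + 1) by ring, ZMod.two_pow_self, zero_mul]
  constructor
  · obtain ⟨v, rfl⟩ := ZMod.intCast_surjective x
    intro hv
    have hdvd : (2 : ℤ) ^ (m + 3) ∣ v ^ 2 - 1 := by
      have := (ZMod.intCast_zmod_eq_zero_iff_dvd (v ^ 2 - 1) (2 ^ (m + 3))).mp
        (by push_cast; rw [hv, sub_self])
      exact_mod_cast this
    rcases Int.two_pow_dvd_sub_one_or_add_one_of_dvd_sq_sub_one hdvd with ⟨t, ht⟩ | ⟨t, ht⟩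
    · have hx : (v : ZMod (2 ^ (m + 3))) = c * t + 1 := by
        rw [show v = 2 ^ (m + 2) * t + 1 by linarith]; push_cast; rfl
      rcases mul_intCast_eq_zero_or_eq_self hc2 t with h | h <;> rw [h] at hx <;> simp [hx]
    · have hx : (v : ZMod (2 ^ (m + 3))) = c * t - 1 := by
        rw [show v = 2 ^ (m + 2) * t - 1 by linarith]; push_cast; rfl
      rcases mul_intCast_eq_zero_or_eq_self hc2 t with h | h <;> rw [h] at hx <;> simp [hx]
  · rintro (rfl | rfl | rfl | rfl)
    · ring
    · ring
    · linear_combination hcc + hc2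
    · linear_combination hcc - hc2

lemma ZMod.card_sq_eq_one_of_two_pow : Nat.card {x : ZMod (2 ^ (m + 3)) // x ^ 2 = 1} = 4 := by
  set c : ZMod (2 ^ (m + 3)) := 2 ^ (m + 2)
  have hne : ∀ k : ℕ, 0 < k → k < 2 ^ (m + 3) → (k : ZMod (2 ^ (m + 3))) ≠ 0 := fun k h0 hk => by
    rw [Ne, ZMod.natCast_eq_zero_iff]; exact Nat.not_dvd_of_pos_of_lt h0 hk
  have hM : 2 ^ 2 ≤ 2 ^ (m + 2) := Nat.pow_le_pow_right (by norm_num) (by omega)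
  have hMN : 2 ^ (m + 3) = 2 * 2 ^ (m + 2) := by ring
  have h2 : (2 : ZMod (2 ^ (m + 3))) ≠ 0 := by exact_mod_cast hne 2 (by norm_num) (by omega)
  have hc : c ≠ 0 := by
    have := hne (2 ^ (m + 2)) (by omega) (by omega)
    push_cast at this; exact this
  have hc2 : c - 2 ≠ 0 := by
    have := hne (2 ^ (m + 2) - 2) (by omega) (by omega)
    rw [Nat.cast_sub (by omega)] at this; push_cast at this; exact this
  have hset : {x : ZMod (2 ^ (m + 3)) | x ^ 2 = 1} = ↑({1, -1, c + 1, c - 1} : Finset _) := by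
    ext x; simp [ZMod.sq_eq_one_iff_of_two_pow, c]
  rw [← Set.coe_ofPred, hset, Nat.card_coe_set_eq, Set.ncard_coe_finset]
  have h2c : 2 * c = 0 := by rw [← ZMod.two_pow_self]; ring
  rw [Finset.card_insert_of_notMem, Finset.card_insert_of_notMem, Finset.card_pair]
  · exact fun h => h2 (by linear_combination h)
  · simp only [Finset.mem_insert, Finset.mem_singleton, not_or]
    exact ⟨fun h => hc2 (by linear_combination h + h2c), fun h => hc (by linear_combination -h)⟩
  · simp only [Finset.mem_insert, Finset.mem_singleton, not_or]
    exact ⟨fun h => h2 (by linear_combination h), fun h => hc (by linear_combination -h),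
      fun h => hc2 (by linear_combination -h)⟩

end TwoPow

lemma C_two_pow_add_three {a : ℤ} (ha : Odd a) (k : ℕ) :
    C (2 ^ (k + 3)) a = if a % 8 = 1 then 4 else 0 := by
  split_ifs with h8
  · obtain ⟨u, hu⟩ := isSquare_intCast_two_pow_of_emod_eight_eq_one h8 (k + 3)
    have hu_unit : IsUnit u := by
      rw [← isUnit_pow_iff two_ne_zero, sq, ← hu]
      exact isUnit_intCast_two_pow ha _
    rw [C, hu, ← sq, card_sq_eq_sq_of_isUnit hu_unit, ZMod.card_sq_eq_one_of_two_pow]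
  · exact C_eq_zero_of_dvd (pow_dvd_pow 2 (by omega) : 2 ^ 3 ∣ 2 ^ (k + 3)) (C_eight_eq_zero ha h8)

lemma tsum_mul_pow_of_forall_add_three_eq {f : ℕ → ℝ} {c x : ℝ} (hf : ∀ k, f (k + 3) = c)
    (hx0 : 0 ≤ x) (hx1 : x < 1) :
    ∑' k, f k * x ^ k = f 0 + f 1 * x + f 2 * x ^ 2 + c * x ^ 3 / (1 - x) := by
  have hshift : ∀ k, f (k + 3) * x ^ (k + 3) = c * x ^ 3 * x ^ k := fun k => by rw [hf]; ring
  have hgeom := summable_geometric_of_lt_one hx0 hx1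
  have hsum : Summable fun k => f k * x ^ k :=
    (summable_nat_add_iff 3).mp (by simpa only [hshift] using hgeom.mul_left (c * x ^ 3))
  rw [← hsum.sum_add_tsum_nat_add 3, tsum_congr hshift, tsum_mul_left,
    tsum_geometric_of_lt_one hx0 hx1]
  simp only [Finset.sum_range_succ, Finset.sum_range_zero]
  ring

lemma tsum_C_two_pow_mul_pow {a : ℤ} (ha : Odd a) {x : ℝ} (hx0 : 0 ≤ x) (hx1 : x < 1) :
    ∑' k, (C (2 ^ k) a : ℝ) * x ^ k = 1 + x + (if a % 4 = 1 then 2 else 0) * x ^ 2 +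
      (if a % 8 = 1 then 4 else 0) * x ^ 3 / (1 - x) := by
  rw [tsum_mul_pow_of_forall_add_three_eq (fun k => by rw [C_two_pow_add_three ha k]) hx0 hx1]
  simp [C_one, C_two ha, C_four ha, apply_ite]

theorem stmt_10_general (n : ℕ) (hodd : Odd n) (s : ℝ) (hs : 0 < s) :
    (n % 8 = 1 → ∑' k : ℕ, (C (2 ^ k) (-(n : ℤ)) : ℝ) * (2 : ℝ) ^ (-(k : ℝ) * s) =
      1 + (2 : ℝ) ^ (-s)) ∧
    (n % 8 = 3 → ∑' k : ℕ, (C (2 ^ k) (-(n : ℤ)) : ℝ) * (2 : ℝ) ^ (-(k : ℝ) * s) =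
      1 + (2 : ℝ) ^ (-s) + 2 * (2 : ℝ) ^ (-(2 * s))) ∧
    (n % 8 = 5 → ∑' k : ℕ, (C (2 ^ k) (-(n : ℤ)) : ℝ) * (2 : ℝ) ^ (-(k : ℝ) * s) =
      1 + (2 : ℝ) ^ (-s)) ∧
    (n % 8 = 7 → ∑' k : ℕ, (C (2 ^ k) (-(n : ℤ)) : ℝ) * (2 : ℝ) ^ (-(k : ℝ) * s) =
      (1 + (2 : ℝ) ^ (-(2 * s)) + 2 * (2 : ℝ) ^ (-(3 * s))) / (1 - (2 : ℝ) ^ (-s))) := by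
  set x : ℝ := 2 ^ (-s)
  have hx0 : 0 ≤ x := by positivity
  have hx1 : x < 1 := Real.rpow_lt_one_of_one_lt_of_neg one_lt_two (neg_neg_of_pos hs)
  have hpow : ∀ k : ℕ, (2 : ℝ) ^ (-(k * s)) = x ^ k := fun k => by
    rw [← Real.rpow_natCast, ← Real.rpow_mul zero_le_two]; ring_nf
  have hpow2 : (2 : ℝ) ^ (-(2 * s)) = x ^ 2 := by exact_mod_cast hpow 2
  have hpow3 : (2 : ℝ) ^ (-(3 * s)) = x ^ 3 := by exact_mod_cast hpow 3
  have ha : Odd (-(n : ℤ)) := (hodd.natCast).neg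
  simp_rw [neg_mul, hpow, hpow2, hpow3, tsum_C_two_pow_mul_pow ha hx0 hx1]
  refine ⟨fun h => ?_, fun h => ?_, fun h => ?_, fun h => ?_⟩
  · simp [show -(n : ℤ) % 4 ≠ 1 by omega, show -(n : ℤ) % 8 ≠ 1 by omega]
  · simp [show -(n : ℤ) % 4 = 1 by omega, show -(n : ℤ) % 8 ≠ 1 by omega]
  · simp [show -(n : ℤ) % 4 ≠ 1 by omega, show -(n : ℤ) % 8 ≠ 1 by omega]
  · simp only [show -(n : ℤ) % 4 = 1 by omega, show -(n : ℤ) % 8 = 1 by omega, if_true]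
    field_simp [(sub_pos.mpr hx1).ne']
    ring

theorem stmt_10 (n : ℕ) (hn : 0 < n) (hodd : Odd n) (s : ℝ) (hs : 0 < s) :
    (n % 8 = 1 → ∑' k : ℕ, (C (2 ^ k) (-(n : ℤ)) : ℝ) * (2 : ℝ) ^ (-(k : ℝ) * s) =
      1 + (2 : ℝ) ^ (-s)) ∧
    (n % 8 = 3 → ∑' k : ℕ, (C (2 ^ k) (-(n : ℤ)) : ℝ) * (2 : ℝ) ^ (-(k : ℝ) * s) =
      1 + (2 : ℝ) ^ (-s) + 2 * (2 : ℝ) ^ (-(2 * s))) ∧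
    (n % 8 = 5 → ∑' k : ℕ, (C (2 ^ k) (-(n : ℤ)) : ℝ) * (2 : ℝ) ^ (-(k : ℝ) * s) =
      1 + (2 : ℝ) ^ (-s)) ∧
    (n % 8 = 7 → ∑' k : ℕ, (C (2 ^ k) (-(n : ℤ)) : ℝ) * (2 : ℝ) ^ (-(k : ℝ) * s) =
      (1 + (2 : ℝ) ^ (-(2 * s)) + 2 * (2 : ℝ) ^ (-(3 * s))) / (1 - (2 : ℝ) ^ (-s))) :=
  stmt_10_general n hodd s hs
end

section
/- Let n = 3^r · n₀ with r an even positive integer and n₀ a positive integer not divisible by 3, and let s be a real number with s > 1/2. Then Σ_{k=0}^∞ C(3^{k+1}, −n) · 3^{−ks} = (1 + 3^{1−s}) · ((1 − 3^{(1−2s)·r/2}) / (1 − 3^{1−2s})) + 3^{r/2 − rs} · Σ_{k=0}^∞ C(3^{k+1}, −n₀) · 3^{−ks}. -/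
open Finset

theorem C_eq_card_filter_range (M : ℕ) [NeZero M] (n : ℤ) :
    C M n = #{x ∈ range M | ((x : ℕ) : ZMod M) ^ 2 = n} := by
  rw [C, Nat.card_eq_fintype_card, Fintype.card_subtype]
  refine card_nbij' ZMod.val (fun x => (x : ZMod M)) ?_ ?_ ?_ ?_
  · intro x hx
    simp_all [ZMod.val_lt]
  · intro x hx
    simp_all
  · intro x _
    simp
  · intro x hx
    simp_all [Nat.mod_eq_of_lt]

theorem C_eq_C_zero_of_dvd {m : ℕ} {n : ℤ} (h : (m : ℤ) ∣ n) : C m n = C m 0 := by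
  rw [C, C, (ZMod.intCast_zmod_eq_zero_iff_dvd n m).2 h, Int.cast_zero]

theorem card_filter_range_mul_of_periodic {P : ℕ → Prop} [DecidablePred P] {M : ℕ}
    (hP : Function.Periodic P M) (d : ℕ) :
    #{x ∈ range (d * M) | P x} = d * #{x ∈ range M | P x} := by
  induction d with
  | zero => simp
  | succ d ih =>
    rw [add_mul, one_mul, range_eq_Ico, ← Ico_union_Ico_eq_Ico (Nat.zero_le _) le_self_add,
      filter_union, card_union_of_disjoint (disjoint_filter_filter (Ico_disjoint_Ico_consecutive ..)),
      ← range_eq_Ico, ih, Nat.filter_Ico_card_eq_of_periodic _ _ _ hP, Nat.count_eq_card_filter_range]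
    ring

theorem dvd_of_sq_eq_sq_mul {d M x : ℕ} {n : ℤ}
    (h : (x : ZMod (d ^ 2 * M)) ^ 2 = ((d ^ 2 * n : ℤ) : ZMod (d ^ 2 * M))) : d ∣ x := by
  have hdvd : ((d ^ 2 * M : ℕ) : ℤ) ∣ d ^ 2 * n - x ^ 2 := by
    rw [← ZMod.intCast_eq_intCast_iff_dvd_sub]
    exact_mod_cast h
  push_cast at hdvd
  have hsq : (d : ℤ) ^ 2 ∣ (x : ℤ) ^ 2 := by
    simpa using dvd_sub (dvd_mul_right _ n) ((dvd_mul_right _ (M : ℤ)).trans hdvd)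
  exact_mod_cast (Int.pow_dvd_pow_iff two_ne_zero).1 hsq

theorem mul_sq_eq_sq_mul_iff {d : ℕ} (M : ℕ) (hd : d ≠ 0) (w : ℕ) (n : ℤ) :
    ((d * w : ℕ) : ZMod (d ^ 2 * M)) ^ 2 = ((d ^ 2 * n : ℤ) : ZMod (d ^ 2 * M)) ↔
      (w : ZMod M) ^ 2 = n := by
  have cast_sq {K : ℕ} (y : ℕ) : (y : ZMod K) ^ 2 = (((y : ℤ) ^ 2 : ℤ) : ZMod K) := by simp
  rw [cast_sq, cast_sq, ZMod.intCast_eq_intCast_iff_dvd_sub, ZMod.intCast_eq_intCast_iff_dvd_sub]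
  push_cast
  rw [show (d : ℤ) ^ 2 * n - (d * w) ^ 2 = d ^ 2 * (n - w ^ 2) by ring,
    mul_dvd_mul_iff_left (by positivity)]

theorem C_sq_mul (d M : ℕ) [NeZero d] [NeZero M] (n : ℤ) :
    C (d ^ 2 * M) (d ^ 2 * n) = d * C M n := by
  have hP : Function.Periodic (fun w : ℕ => (w : ZMod M) ^ 2 = n) M := by
    intro w
    simp
  rw [C_eq_card_filter_range, C_eq_card_filter_range, ← card_filter_range_mul_of_periodic hP,
    eq_comm, ← card_image_of_injective _ (mul_right_injective₀ (NeZero.ne d))]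
  congr 1
  ext x
  simp only [mem_filter, mem_range, mem_image]
  constructor
  · rintro ⟨w, ⟨hw, hsq⟩, rfl⟩
    refine ⟨?_, (mul_sq_eq_sq_mul_iff M (NeZero.ne d) w n).2 hsq⟩
    rw [sq, mul_assoc]
    exact (Nat.mul_lt_mul_left (NeZero.pos d)).2 hw
  · rintro ⟨hx, hsq⟩
    obtain ⟨w, rfl⟩ := dvd_of_sq_eq_sq_mul hsq
    refine ⟨w, ⟨?_, (mul_sq_eq_sq_mul_iff M (NeZero.ne d) w n).1 hsq⟩, rfl⟩
    rw [sq, mul_assoc] at hx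
    exact (Nat.mul_lt_mul_left (NeZero.pos d)).1 hx

theorem C_pow_add_two_mul (p : ℕ) [NeZero p] (m t : ℕ) (n : ℤ) :
    C (p ^ (m + 2 * t)) (p ^ (2 * t) * n) = p ^ t * C (p ^ m) n := by
  have := C_sq_mul (p ^ t) (p ^ m) n
  rwa [Nat.cast_pow, ← pow_mul, ← pow_mul, ← pow_add, mul_comm t, add_comm] at this

theorem C_prime_pow_zero (p : ℕ) [Fact p.Prime] (m : ℕ) : C (p ^ m) 0 = p ^ (m / 2) := by
  have h := C_sq_mul (p ^ (m / 2)) (p ^ (m % 2)) 0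
  rw [mul_zero, ← pow_mul, ← pow_add, mul_comm, Nat.div_add_mod] at h
  rw [h]
  rcases Nat.mod_two_eq_zero_or_one m with h2 | h2 <;> rw [h2]
  · rw [pow_zero]
    simp [C]
  · rw [pow_one]
    simp only [C, Int.cast_zero, sq_eq_zero_iff]
    simp

theorem C_prime_pow_pow_mul_of_le (p : ℕ) [Fact p.Prime] {m r : ℕ} (h : m ≤ r) (n : ℤ) :
    C (p ^ m) (p ^ r * n) = p ^ (m / 2) := by
  rw [C_eq_C_zero_of_dvd, C_prime_pow_zero]
  exact_mod_cast (pow_dvd_pow (p : ℤ) h).mul_right n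

theorem IsLocalRing.eq_or_eq_neg_of_sq_eq_sq {R : Type*} [CommRing R] [IsLocalRing R]
    (h2 : IsUnit (2 : R)) {x y : R} (hx : IsUnit x) (h : y ^ 2 = x ^ 2) : y = x ∨ y = -x := by
  have hprod : (y - x) * (y + x) = 0 := by linear_combination h
  have hsum : IsUnit ((y + x) + (x - y)) := by
    convert h2.mul hx using 1
    ring
  rcases isUnit_or_isUnit_of_isUnit_add hsum with hu | hu
  · exact Or.inl (sub_eq_zero.1 (hu.mul_left_eq_zero.1 hprod))
  · exact Or.inr (eq_neg_of_add_eq_zero_left (hu.mul_left_eq_zero.1 (by linear_combination -h)))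

theorem IsLocalRing.card_sq_eq_le_two {R : Type*} [CommRing R] [IsLocalRing R]
    (h2 : IsUnit (2 : R)) {c : R} (hc : IsUnit c) : Nat.card {x : R // x ^ 2 = c} ≤ 2 := by
  rcases isEmpty_or_nonempty {x : R // x ^ 2 = c} with h | ⟨x, hx⟩
  · simp
  have hxu : IsUnit x := (isUnit_pow_iff two_ne_zero).1 (hx ▸ hc)
  calc Nat.card {x : R // x ^ 2 = c} ≤ Nat.card ({x, -x} : Set R) :=
        Nat.card_mono (Set.toFinite _) fun y hy =>
          IsLocalRing.eq_or_eq_neg_of_sq_eq_sq h2 hxu (hy.trans hx.symm)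
    _ ≤ 2 := by
        rw [Nat.card_coe_set_eq]
        exact (Set.ncard_insert_le _ _).trans (by simp)

theorem ZMod.isLocalRing_prime_pow (p : ℕ) [hp : Fact p.Prime] {m : ℕ} (hm : m ≠ 0) :
    IsLocalRing (ZMod (p ^ m)) :=
  have : Nontrivial (ZMod (p ^ m)) :=
    ZMod.nontrivial_iff.2 (Nat.one_lt_pow hm hp.out.one_lt).ne'
  IsLocalRing.of_surjective' (PadicInt.toZModPow m) (ZMod.ringHom_surjective _)

theorem C_prime_pow_le_two {p : ℕ} [hp : Fact p.Prime] (hp2 : p ≠ 2) {n : ℤ}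
    (hn : ¬ (p : ℤ) ∣ n) (m : ℕ) : C (p ^ m) n ≤ 2 := by
  rcases eq_or_ne m 0 with rfl | hm
  · rw [pow_zero, C]
    exact (Finite.card_subtype_le _).trans (by simp)
  have := ZMod.isLocalRing_prime_pow p hm
  have hunit {a : ℕ} (ha : ¬ p ∣ a) : IsUnit (a : ZMod (p ^ m)) :=
    (ZMod.isUnit_natCast_iff_not_dvd_pow hp.out (Nat.pos_of_ne_zero hm)).2 ha
  refine IsLocalRing.card_sq_eq_le_two ?_ ?_
  · exact_mod_cast hunit fun h => hp2 ((Nat.prime_dvd_prime_iff_eq hp.out Nat.prime_two).1 h)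
  · obtain ⟨a, rfl | rfl⟩ := Int.eq_nat_or_neg n <;>
      simpa [Int.natCast_dvd_natCast] using hunit (by simpa [Int.natCast_dvd_natCast] using hn)

theorem summable_C_prime_pow_mul_rpow {p : ℕ} [hp : Fact p.Prime] (hp2 : p ≠ 2) {n : ℤ}
    (hn : ¬ (p : ℤ) ∣ n) {s : ℝ} (hs : 0 < s) :
    Summable fun k : ℕ => (C (p ^ (k + 1)) n : ℝ) * (p : ℝ) ^ (-(k : ℝ) * s) := by
  have hp1 : (1 : ℝ) < p := by exact_mod_cast hp.out.one_lt
  have hq : (p : ℝ) ^ (-s) < 1 := Real.rpow_lt_one_of_one_lt_of_neg hp1 (neg_neg_of_pos hs)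
  refine Summable.of_nonneg_of_le (fun k => by positivity) (fun k => ?_)
    ((summable_geometric_of_lt_one (by positivity) hq).mul_left 2)
  rw [← Real.rpow_natCast, ← Real.rpow_mul (by positivity), show -s * k = -(k : ℝ) * s by ring]
  exact mul_le_mul_of_nonneg_right (by exact_mod_cast C_prime_pow_le_two hp2 hn (k + 1))
    (by positivity)

theorem sum_range_two_mul_pow_half_mul_rpow {b : ℝ} (hb : 0 < b) (s : ℝ) (t : ℕ) :
    ∑ k ∈ range (2 * t), b ^ ((k + 1) / 2) * b ^ (-(k : ℝ) * s) =
      (1 + b ^ (1 - s)) * ∑ i ∈ range t, (b ^ (1 - 2 * s)) ^ i := by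
  induction t with
  | zero => simp
  | succ t ih =>
    rw [mul_add_one, sum_range_succ, sum_range_succ, ih, sum_range_succ,
      show (2 * t + 1) / 2 = t by omega, show (2 * t + 1 + 1) / 2 = t + 1 by omega]
    have heven : b ^ t * b ^ (-((2 * t : ℕ) : ℝ) * s) = (b ^ (1 - 2 * s)) ^ t := by
      rw [← Real.rpow_natCast, ← Real.rpow_natCast, ← Real.rpow_mul hb.le, ← Real.rpow_add hb]
      congr 1
      push_cast
      ring
    have hodd : b ^ (t + 1) * b ^ (-((2 * t + 1 : ℕ) : ℝ) * s) =
        b ^ (1 - s) * (b ^ (1 - 2 * s)) ^ t := by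
      rw [← Real.rpow_natCast, ← Real.rpow_natCast, ← Real.rpow_mul hb.le, ← Real.rpow_add hb,
        ← Real.rpow_add hb]
      congr 1
      push_cast
      ring
    rw [heven, hodd]
    ring

theorem sum_range_pow_half_mul_rpow_of_even {b : ℝ} (hb : 1 < b) {s : ℝ} (hs : s ≠ 1 / 2)
    {r : ℕ} (hr : Even r) :
    ∑ k ∈ range r, b ^ ((k + 1) / 2) * b ^ (-(k : ℝ) * s) =
      (1 + b ^ (1 - s)) * ((1 - b ^ ((1 - 2 * s) * r / 2)) / (1 - b ^ (1 - 2 * s))) := by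
  obtain ⟨t, rfl⟩ := hr
  have hx : b ^ (1 - 2 * s) ≠ 1 := fun h => hs <| by
    have := (Real.rpow_right_inj (by linarith) hb.ne').1 (h.trans (Real.rpow_zero b).symm)
    linarith
  rw [← two_mul, sum_range_two_mul_pow_half_mul_rpow (by linarith), geom_sum_eq hx,
    ← neg_div_neg_eq, neg_sub, neg_sub, ← Real.rpow_natCast, ← Real.rpow_mul (by linarith)]
  push_cast
  ring_nf

theorem tsum_C_prime_pow_pow_mul_mul_rpow (p : ℕ) [hp : Fact p.Prime] {r : ℕ} (hr : Even r)
    (n : ℤ) {s : ℝ} (hs : s ≠ 1 / 2)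
    (hsum : Summable fun k : ℕ => (C (p ^ (k + 1)) n : ℝ) * (p : ℝ) ^ (-(k : ℝ) * s)) :
    ∑' k : ℕ, (C (p ^ (k + 1)) (p ^ r * n) : ℝ) * (p : ℝ) ^ (-(k : ℝ) * s) =
      (1 + (p : ℝ) ^ (1 - s)) *
        ((1 - (p : ℝ) ^ ((1 - 2 * s) * r / 2)) / (1 - (p : ℝ) ^ (1 - 2 * s))) +
      (p : ℝ) ^ ((r : ℝ) / 2 - r * s) *
        ∑' k : ℕ, (C (p ^ (k + 1)) n : ℝ) * (p : ℝ) ^ (-(k : ℝ) * s) := by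
  have hp1 : (1 : ℝ) < p := by exact_mod_cast hp.out.one_lt
  have htail (i : ℕ) :
      (C (p ^ (i + r + 1)) (p ^ r * n) : ℝ) * (p : ℝ) ^ (-((i + r : ℕ) : ℝ) * s) =
        (p : ℝ) ^ ((r : ℝ) / 2 - r * s) * ((C (p ^ (i + 1)) n : ℝ) * (p : ℝ) ^ (-(i : ℝ) * s)) := by
    obtain ⟨t, rfl⟩ := hr
    rw [← two_mul, add_right_comm, C_pow_add_two_mul]
    have hpow : (p : ℝ) ^ t * (p : ℝ) ^ (-((i + 2 * t : ℕ) : ℝ) * s) =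
        (p : ℝ) ^ (((2 * t : ℕ) : ℝ) / 2 - (2 * t : ℕ) * s) * (p : ℝ) ^ (-(i : ℝ) * s) := by
      rw [← Real.rpow_natCast, ← Real.rpow_add (by linarith), ← Real.rpow_add (by linarith)]
      congr 1
      push_cast
      ring
    push_cast at hpow ⊢
    linear_combination (C (p ^ (i + 1)) n : ℝ) * hpow
  have hF : Summable fun k : ℕ =>
      (C (p ^ (k + 1)) (p ^ r * n) : ℝ) * (p : ℝ) ^ (-(k : ℝ) * s) := by
    rw [← summable_nat_add_iff r]
    simpa only [htail] using hsum.mul_left _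
  rw [← hF.sum_add_tsum_nat_add r, tsum_congr htail, tsum_mul_left,
    sum_congr rfl fun k hk => by rw [C_prime_pow_pow_mul_of_le p (mem_range.1 hk)],
    ← sum_range_pow_half_mul_rpow_of_even hp1 hs hr]
  push_cast
  rfl

theorem stmt_15_general (r : ℕ) (hr : Even r) (n₀ : ℕ)
    (h3n₀ : ¬ 3 ∣ n₀) (s : ℝ) (hs : 1 / 2 < s) :
    ∑' k : ℕ, (C (3 ^ (k + 1)) (-((3 : ℤ) ^ r * n₀)) : ℝ) * (3 : ℝ) ^ (-(k : ℝ) * s) =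
      (1 + (3 : ℝ) ^ (1 - s)) *
        ((1 - (3 : ℝ) ^ ((1 - 2 * s) * (r : ℝ) / 2)) / (1 - (3 : ℝ) ^ (1 - 2 * s))) +
      (3 : ℝ) ^ ((r : ℝ) / 2 - (r : ℝ) * s) *
        ∑' k : ℕ, (C (3 ^ (k + 1)) (-(n₀ : ℤ)) : ℝ) * (3 : ℝ) ^ (-(k : ℝ) * s) := by
  have hsum := summable_C_prime_pow_mul_rpow (p := 3) (by norm_num) (n := -n₀)
    (by rwa [dvd_neg, Int.natCast_dvd_natCast]) (s := s) (by linarith)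
  simpa only [mul_neg, Nat.cast_ofNat] using
    tsum_C_prime_pow_pow_mul_mul_rpow 3 hr (-n₀) hs.ne' hsum

theorem stmt_15 (r : ℕ) (hr : Even r) (hrpos : 0 < r) (n₀ : ℕ) (hn₀ : 0 < n₀)
    (h3n₀ : ¬ 3 ∣ n₀) (s : ℝ) (hs : 1 / 2 < s) :
    ∑' k : ℕ, (C (3 ^ (k + 1)) (-((3 : ℤ) ^ r * n₀)) : ℝ) * (3 : ℝ) ^ (-(k : ℝ) * s) =
      (1 + (3 : ℝ) ^ (1 - s)) *
        ((1 - (3 : ℝ) ^ ((1 - 2 * s) * (r : ℝ) / 2)) / (1 - (3 : ℝ) ^ (1 - 2 * s))) +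
      (3 : ℝ) ^ ((r : ℝ) / 2 - (r : ℝ) * s) *
        ∑' k : ℕ, (C (3 ^ (k + 1)) (-(n₀ : ℤ)) : ℝ) * (3 : ℝ) ^ (-(k : ℝ) * s) :=
  stmt_15_general r hr n₀ h3n₀ s hs
end
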